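/- arXiv:2211.16302 — 3 statements merged into one kernel-verified Lean document; each statement's English description precedes it below -/
import Mathlib

section
/- Let φ = Σ_{g ≥ 0} ε^{g−1} φ_g be a formal Laurent series in ε with coefficients φ_g in a differential ring, and fix i ≥ 0. For a finitely supported sequence (m_1, m_2, …) of nonnegative integers with Σ_j j·m_j = i, the ε-expansion of the product Π_{j ≥ 1} (∂_x^j φ)^{m_j} equals ε^{−i}(∂_x φ_0)^i + ε^{−i+1}·i·(∂_x φ_0)^{i−1}(∂_x φ_1) + O(ε^{−i+2}) if m_1 = i and m_j = 0 for j ≥ 2; equals ε^{−i+1}(∂_x φ_0)^{i−2}(∂_x² φ_0) + O(ε^{−i+2}) if m_1 = i − 2, m_2 = 1, and m_j = 0 for j ≥ 3; and is O(ε^{−i+2}) otherwise. -/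
/-! Each factor `∂ₓʲφ` is `ε⁻¹` times a power series in `ε`, so the product is `ε^(-M) F` with
`M = Σ m_j` and `F = Π (Σ_g ε^g ∂ₓʲφ_g)^{m_j}` a power series. As `i = M + Σ (j - 1) m_j`, the
coefficients of `ε^(-i)` and `ε^(-i+1)` are those of `F` at `-Σ (j - 1) m_j` and `1 - Σ (j - 1) m_j`:
both vanish unless `Σ (j - 1) m_j ≤ 1`, which leaves exactly the two special cases, where `F` is
an explicit product of at most two powers. -/

open Finset

variable {R : Type*} [CommRing R] [Algebra ℚ R]

/-- The formal Laurent series `Σ_{g ≥ 0} ε^{g−1} f_g` in the variable `ε`,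
with coefficients `f_g` in `R`. -/
noncomputable def epsLaurent (f : ℕ → R) : HahnSeries ℤ R :=
  HahnSeries.single (-1 : ℤ) (1 : R) *
    HahnSeries.ofPowerSeries ℤ R (PowerSeries.mk f)

theorem HahnSeries.coeff_single_neg_mul_ofPowerSeries {S : Type*} [Semiring S] (M : ℕ)
    (F : PowerSeries S) (n : ℤ) :
    (HahnSeries.single (-(M : ℤ)) (1 : S) * HahnSeries.ofPowerSeries ℤ S F).coeff n =
      if n + M < 0 then 0 else PowerSeries.coeff (n + M).natAbs F := by
  rw [HahnSeries.coeff_single_mul, one_mul, sub_neg_eq_add, PowerSeries.coeff_coe]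

theorem prod_epsLaurent_pow {S : Type*} [CommRing S] (s : Finset ℕ) (f : ℕ → ℕ → S)
    (m : ℕ → ℕ) :
    ∏ j ∈ s, epsLaurent (f j) ^ m j =
      HahnSeries.single (-(∑ j ∈ s, m j : ℕ) : ℤ) 1 *
        HahnSeries.ofPowerSeries ℤ S (∏ j ∈ s, PowerSeries.mk (f j) ^ m j) := by
  simp only [epsLaurent, mul_pow, prod_mul_distrib]
  rw [prod_pow_eq_pow_sum, HahnSeries.single_pow, one_pow, map_prod]
  simp only [map_pow, nsmul_eq_mul, mul_neg, mul_one]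

@[to_additive]
theorem prod_Icc_eq_mul_of_forall_three_le {M : Type*} [CommMonoid M] {i : ℕ} {m : ℕ → ℕ}
    (g : ℕ → ℕ → M) (hg : ∀ j, g j 0 = 1) (hsupp : ∀ j, i < j → m j = 0)
    (h3 : ∀ j, 3 ≤ j → m j = 0) :
    ∏ j ∈ Icc 1 i, g j (m j) = g 1 (m 1) * g 2 (m 2) := by
  have hi : ∏ j ∈ Icc 1 i, g j (m j) = ∏ j ∈ Icc 1 (i + 2), g j (m j) :=
    prod_subset (Icc_subset_Icc_right (by omega)) fun j hj hji => by
      rw [hsupp j (by simp only [mem_Icc] at hj hji; omega), hg]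
  have h12 : ∏ j ∈ {1, 2}, g j (m j) = ∏ j ∈ Icc 1 (i + 2), g j (m j) :=
    prod_subset (by intro j; simp only [mem_insert, mem_singleton, mem_Icc]; omega)
      fun j hj hj12 => by
        rw [h3 j (by simp only [mem_insert, mem_singleton, mem_Icc] at hj hj12; omega), hg]
  rw [hi, ← h12, prod_pair (by norm_num)]

theorem sum_add_pred_mul_le_sum_mul {s : Finset ℕ} (hs : 0 ∉ s) (m : ℕ → ℕ) {k : ℕ}
    (hk : k ∈ s) : ∑ j ∈ s, m j + (k - 1) * m k ≤ ∑ j ∈ s, j * m j := by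
  calc ∑ j ∈ s, m j + (k - 1) * m k
      ≤ ∑ j ∈ s, m j + ∑ j ∈ s, (j - 1) * m j := by
        gcongr; exact single_le_sum (f := fun j => (j - 1) * m j) (fun _ _ => by positivity) hk
    _ = ∑ j ∈ s, j * m j := by
        rw [← sum_add_distrib]
        refine sum_congr rfl fun j hj => ?_
        obtain _ | l := j
        · exact absurd hj hs
        · rw [Nat.add_sub_cancel]
          ring

theorem forall_three_le_eq_zero_of_le_sum_add_one {i : ℕ} {m : ℕ → ℕ}
    (hsupp : ∀ j, i < j → m j = 0) (hsum : ∑ j ∈ Icc 1 i, j * m j = i)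
    (hle : i ≤ ∑ j ∈ Icc 1 i, m j + 1) (j : ℕ) (hj : 3 ≤ j) : m j = 0 := by
  by_contra hmj
  have hji : j ≤ i := by
    by_contra hij
    exact hmj (hsupp j (by omega))
  have hbound :=
    sum_add_pred_mul_le_sum_mul (s := Icc 1 i) (by simp) m (mem_Icc.2 ⟨by omega, hji⟩)
  have : 2 ≤ (j - 1) * m j :=
    (show 2 ≤ j - 1 by omega).trans (Nat.le_mul_of_pos_right _ (Nat.pos_of_ne_zero hmj))
  omega

theorem sum_Icc_add_two_le {i : ℕ} {m : ℕ → ℕ} (hsupp : ∀ j, i < j → m j = 0)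
    (hsum : ∑ j ∈ Icc 1 i, j * m j = i) (hn1 : ¬ (m 1 = i ∧ ∀ j, 2 ≤ j → m j = 0))
    (hn2 : ¬ (m 1 = i - 2 ∧ m 2 = 1 ∧ ∀ j, 3 ≤ j → m j = 0)) :
    ∑ j ∈ Icc 1 i, m j + 2 ≤ i := by
  by_contra! hgt
  have h3 := forall_three_le_eq_zero_of_le_sum_add_one hsupp hsum (by omega)
  have hM := sum_Icc_eq_add_of_forall_three_le (fun _ k => k) (fun _ => rfl) hsupp h3
  have hi := sum_Icc_eq_add_of_forall_three_le (fun j k => j * k) (fun _ => rfl) hsupp h3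
  obtain h2 | h2 : m 2 = 0 ∨ m 2 = 1 := by omega
  · exact hn1 ⟨by omega, fun j hj => by obtain rfl | hj := hj.eq_or_lt; exacts [h2, h3 j hj]⟩
  · exact hn2 ⟨by omega, h2, h3⟩

/-- Let `φ = Σ_{g ≥ 0} ε^{g−1} φ_g` be a formal Laurent series in `ε` with
coefficients in a differential ring `(R, ∂ₓ)`, and fix `i ≥ 0`.  For a finitely supported
sequence `(m₁, m₂, …)` of nonnegative integers with `Σ_j j·m_j = i`, consider the product
`P = Π_{j ≥ 1} (∂ₓ^j φ)^{m_j}`, where `∂ₓ` acts on `φ` coefficientwise.  Then: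
* if `m₁ = i` and `m_j = 0` for `j ≥ 2`, then
  `P = ε^{−i}(∂ₓφ₀)^i + ε^{−i+1}·i·(∂ₓφ₀)^{i−1}(∂ₓφ₁) + O(ε^{−i+2})`;
* if `m₁ = i − 2`, `m₂ = 1` and `m_j = 0` for `j ≥ 3`, then
  `P = ε^{−i+1}(∂ₓφ₀)^{i−2}(∂ₓ²φ₀) + O(ε^{−i+2})`;
* otherwise `P = O(ε^{−i+2})`;
where `O(ε^N)` means that all Laurent coefficients of `ε^n` with `n < N` vanish, so the
statement amounts to computing the coefficients of `ε^{−i}` and `ε^{−i+1}` of `P`. -/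
theorem eps_expansion_of_monomial (D : Derivation ℚ R R) (φg : ℕ → R) (i : ℕ)
    (m : ℕ → ℕ) (hsupp : ∀ j : ℕ, i < j → m j = 0)
    (hsum : ∑ j ∈ Finset.Icc 1 i, j * m j = i)
    (P : HahnSeries ℤ R)
    (hP : P = ∏ j ∈ Finset.Icc 1 i,
        (epsLaurent (fun g => (⇑D)^[j] (φg g))) ^ (m j)) :
    ((m 1 = i ∧ ∀ j : ℕ, 2 ≤ j → m j = 0) →
        P.coeff (-(i : ℤ)) = (D (φg 0)) ^ i ∧
        P.coeff (-(i : ℤ) + 1) = i • ((D (φg 0)) ^ (i - 1) * D (φg 1))) ∧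
    ((m 1 = i - 2 ∧ m 2 = 1 ∧ ∀ j : ℕ, 3 ≤ j → m j = 0) →
        P.coeff (-(i : ℤ)) = 0 ∧
        P.coeff (-(i : ℤ) + 1) = (D (φg 0)) ^ (i - 2) * (⇑D)^[2] (φg 0)) ∧
    ((¬ (m 1 = i ∧ ∀ j : ℕ, 2 ≤ j → m j = 0) ∧
      ¬ (m 1 = i - 2 ∧ m 2 = 1 ∧ ∀ j : ℕ, 3 ≤ j → m j = 0)) →
        P.coeff (-(i : ℤ)) = 0 ∧ P.coeff (-(i : ℤ) + 1) = 0) := by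
  set M := ∑ j ∈ Icc 1 i, m j
  set F := ∏ j ∈ Icc 1 i, PowerSeries.mk (fun g => (⇑D)^[j] (φg g)) ^ m j
  have hcoeff (n : ℤ) :
      P.coeff n = if n + M < 0 then 0 else PowerSeries.coeff (n + M).natAbs F := by
    rw [hP, prod_epsLaurent_pow, HahnSeries.coeff_single_neg_mul_ofPowerSeries]
  have hM (h3 : ∀ j, 3 ≤ j → m j = 0) : M = m 1 + m 2 :=
    sum_Icc_eq_add_of_forall_three_le (fun _ k => k) (fun _ => rfl) hsupp h3
  have hi_eq (h3 : ∀ j, 3 ≤ j → m j = 0) : i = m 1 + 2 * m 2 := by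
    rw [← hsum, sum_Icc_eq_add_of_forall_three_le (fun j k => j * k) (fun _ => rfl) hsupp h3,
      one_mul]
  have hF (h3 : ∀ j, 3 ≤ j → m j = 0) : F = PowerSeries.mk (fun g => D (φg g)) ^ m 1 *
      PowerSeries.mk (fun g => (⇑D)^[2] (φg g)) ^ m 2 :=
    prod_Icc_eq_mul_of_forall_three_le (fun j k => PowerSeries.mk (fun g => (⇑D)^[j] (φg g)) ^ k)
      (fun _ => pow_zero _) hsupp h3
  refine ⟨fun ⟨h1, h2⟩ => ?_, fun ⟨h1, h2, h3⟩ => ?_, fun ⟨hn1, hn2⟩ => ?_⟩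
  · have h3 : ∀ j, 3 ≤ j → m j = 0 := fun j hj => h2 j (by omega)
    rw [hcoeff, hcoeff, hM h3, hF h3, h1, h2 2 le_rfl, pow_zero, mul_one, add_zero,
      if_neg (by omega), if_neg (by omega), show (-(i : ℤ) + i).natAbs = 0 by omega,
      show (-(i : ℤ) + 1 + i).natAbs = 1 by omega, PowerSeries.coeff_zero_eq_constantCoeff,
      map_pow, PowerSeries.coeff_one_pow, PowerSeries.constantCoeff_mk, PowerSeries.coeff_mk,
      nsmul_eq_mul]
    exact ⟨rfl, by ring⟩
  · have hi := hi_eq h3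
    rw [hcoeff, hcoeff, hM h3, hF h3, h1, h2, if_pos (by omega), if_neg (by omega),
      show (-(i : ℤ) + 1 + ↑(i - 2 + 1)).natAbs = 0 by omega,
      PowerSeries.coeff_zero_eq_constantCoeff, map_mul, map_pow, pow_one,
      PowerSeries.constantCoeff_mk, PowerSeries.constantCoeff_mk]
    exact ⟨rfl, rfl⟩
  · have hlt : M + 2 ≤ i := sum_Icc_add_two_le hsupp hsum hn1 hn2
    rw [hcoeff, hcoeff, if_pos (by omega), if_pos (by omega)]
    exact ⟨rfl, rfl⟩
end

section
/- Let φ = Σ_{g ≥ 0} ε^{g−1} φ_g as above. Then for every i ≥ 0, ∂_x^i(e^φ)/e^φ = ε^{−i}(∂_x φ_0)^i + ε^{−i+1}·( i·(∂_x φ_0)^{i−1}(∂_x φ_1) + (i(i−1)/2)·(∂_x φ_0)^{i−2}(∂_x² φ_0) ) + O(ε^{−i+2}). -/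
/-!
With `Ψᵢ = ∂ⁱ(e^φ)/e^φ` one has `Ψᵢ₊₁ = ∂Ψᵢ + (∂φ)·Ψᵢ`, and `∂φ` has `ε`-order `≥ -1` with
first two coefficients `∂φ₀, ∂φ₁`. By induction `Ψᵢ` has `ε`-order `≥ -i`, so only the two
lowest terms of each factor of `(∂φ)·Ψᵢ` reach the coefficients of `ε^{-i-1}` and `ε^{-i}`:
the first gets multiplied by `∂φ₀` at each step, and the second satisfies
`cᵢ₊₁ = ∂((∂φ₀)ⁱ) + ∂φ₀·cᵢ + ∂φ₁·(∂φ₀)ⁱ`, which the closed form solves because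
`C(i+1, 2) = i + C(i, 2)`.
-/

open Finset

variable {R : Type*} [CommRing R] [Algebra ℚ R]

/-- The coefficientwise (ε-linear) extension of a derivation `D` on `R` to formal Laurent
series in `ε` with coefficients in `R`. -/
def coeffwise (D : Derivation ℚ R R) (f : HahnSeries ℤ R) : HahnSeries ℤ R where
  coeff := fun n => D (f.coeff n)
  isPWO_support' := f.isPWO_support'.mono (by
    intro n hn
    simp only [Function.mem_support] at hn ⊢
    intro h
    exact hn (by rw [h, map_zero]))

theorem HahnSeries.coeff_mul_add_add_natCast {S : Type*} [NonUnitalNonAssocSemiring S]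
    {x y : HahnSeries ℤ S} {p q : ℤ}
    (hx : (p : WithTop ℤ) ≤ x.orderTop) (hy : (q : WithTop ℤ) ≤ y.orderTop) (k : ℕ) :
    (x * y).coeff (p + q + k) =
      ∑ jl ∈ antidiagonal k, x.coeff (p + jl.1) * y.coeff (q + jl.2) := by
  have hx' := HahnSeries.le_orderTop_iff_forall.mp hx
  have hy' := HahnSeries.le_orderTop_iff_forall.mp hy
  rw [HahnSeries.coeff_mul]
  symm
  refine Finset.sum_bij_ne_zero (fun jl _ _ => (p + jl.1, q + jl.2)) ?_ ?_ ?_ ?_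
  · rintro ⟨j, l⟩ hjl hne
    rw [HasAntidiagonal.mem_antidiagonal] at hjl
    refine Finset.mem_antidiagonal.mpr ⟨?_, ?_, by simp only; omega⟩
    · exact (HahnSeries.mem_support _ _).mpr (left_ne_zero_of_mul hne)
    · exact (HahnSeries.mem_support _ _).mpr (right_ne_zero_of_mul hne)
  · rintro ⟨j, l⟩ - - ⟨j', l'⟩ - - h
    simp only [Prod.mk.injEq] at h ⊢
    omega
  · rintro ⟨m, n⟩ hmn hne
    rw [Finset.mem_antidiagonal] at hmn
    have hm : p ≤ m := not_lt.mp fun h => hne (by simp [hx' m (by exact_mod_cast h)])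
    have hn : q ≤ n := not_lt.mp fun h => hne (by simp [hy' n (by exact_mod_cast h)])
    refine ⟨((m - p).toNat, (n - q).toNat), ?_, ?_, ?_⟩
    · rw [HasAntidiagonal.mem_antidiagonal]; omega
    · simp only [Int.toNat_of_nonneg (sub_nonneg.mpr hm), Int.toNat_of_nonneg (sub_nonneg.mpr hn)]
      simpa [add_sub_cancel] using hne
    · simp only [Prod.mk.injEq]; omega
  · intros; rfl

@[simp]
theorem coeffwise_coeff (D : Derivation ℚ R R) (f : HahnSeries ℤ R) (n : ℤ) :
    (coeffwise D f).coeff n = D (f.coeff n) :=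
  rfl

theorem orderTop_le_orderTop_coeffwise (D : Derivation ℚ R R) (f : HahnSeries ℤ R) :
    f.orderTop ≤ (coeffwise D f).orderTop :=
  HahnSeries.le_orderTop_iff_forall.mpr fun n hn => by
    rw [coeffwise_coeff, HahnSeries.coeff_eq_zero_of_lt_orderTop hn, map_zero]

theorem epsLaurent_coeff_natCast_sub_one {S : Type*} [CommRing S] (f : ℕ → S) (n : ℕ) :
    (epsLaurent f).coeff (n - 1) = f n := by
  rw [epsLaurent, sub_eq_add_neg, HahnSeries.coeff_single_mul_add, one_mul,
    HahnSeries.ofPowerSeries_apply_coeff, PowerSeries.coeff_mk]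

theorem neg_one_le_orderTop_epsLaurent {S : Type*} [CommRing S] (f : ℕ → S) :
    ((-1 : ℤ) : WithTop ℤ) ≤ (epsLaurent f).orderTop := by
  have hpow : ((0 : ℤ) : WithTop ℤ) ≤ (HahnSeries.ofPowerSeries ℤ S (PowerSeries.mk f)).orderTop :=
    HahnSeries.le_orderTop_iff_forall.mpr fun n hn => by
      rw [HahnSeries.ofPowerSeries_apply, HahnSeries.embDomain_of_notMem_range]
      rintro ⟨m, rfl⟩
      exact absurd (WithTop.coe_lt_coe.mp hn) (by simp)
  calc ((-1 : ℤ) : WithTop ℤ) = ((-1 : ℤ) : WithTop ℤ) + ((0 : ℤ) : WithTop ℤ) := by simp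
    _ ≤ _ := (add_le_add HahnSeries.orderTop_single_le hpow).trans HahnSeries.orderTop_add_le_mul

theorem choose_two_succ_identity {A : Type*} [CommSemiring A] (a b c : A) (i : ℕ) :
    i * (a ^ (i - 1) * c) + (a * (i * (a ^ (i - 1) * b) + i.choose 2 * (a ^ (i - 2) * c)) +
      b * a ^ i) = (i + 1) * (a ^ i * b) + (i + 1).choose 2 * (a ^ (i - 1) * c) := by
  rcases i with _ | _ | k
  · simp
  · norm_num
    ring
  · rw [Nat.choose_succ_succ' (k + 2), Nat.choose_one_right]
    simp only [show k + 2 - 1 = k + 1 by omega, show k + 2 - 2 = k by omega]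
    push_cast
    ring

/-- `∂ⁱ(e^φ) / e^φ`, computed through `∂(Ψ e^φ) = (∂Ψ + ∂φ · Ψ) e^φ`. -/
noncomputable def iteratedDerivExpDiv (D : Derivation ℚ R R) (φ : HahnSeries ℤ R) :
    ℕ → HahnSeries ℤ R
  | 0 => 1
  | n + 1 => coeffwise D (iteratedDerivExpDiv D φ n) +
      coeffwise D φ * iteratedDerivExpDiv D φ n

section iteratedDerivExpDiv

variable {D : Derivation ℚ R R} {φ : HahnSeries ℤ R}

theorem neg_le_orderTop_iteratedDerivExpDiv (hφ : ((-1 : ℤ) : WithTop ℤ) ≤ φ.orderTop) (i : ℕ) :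
    ((-i : ℤ) : WithTop ℤ) ≤ (iteratedDerivExpDiv D φ i).orderTop := by
  induction i with
  | zero =>
    refine HahnSeries.le_orderTop_iff_forall.mpr fun n hn => ?_
    rw [iteratedDerivExpDiv, HahnSeries.coeff_one, if_neg]
    exact (WithTop.coe_lt_coe.mp hn).ne
  | succ i ih =>
    have hDφ := hφ.trans (orderTop_le_orderTop_coeffwise D φ)
    have hle : ((-(i + 1 : ℕ) : ℤ) : WithTop ℤ) ≤ ((-i : ℤ) : WithTop ℤ) :=
      WithTop.coe_le_coe.mpr (by omega)
    refine le_trans ?_ HahnSeries.min_orderTop_le_orderTop_add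
    refine le_min (hle.trans (ih.trans (orderTop_le_orderTop_coeffwise D _))) ?_
    calc ((-(i + 1 : ℕ) : ℤ) : WithTop ℤ) = ((-1 : ℤ) : WithTop ℤ) + ((-i : ℤ) : WithTop ℤ) := by
          rw [← WithTop.coe_add]; congr 1; push_cast; ring
      _ ≤ _ := (add_le_add hDφ ih).trans HahnSeries.orderTop_add_le_mul

theorem coeff_neg_iteratedDerivExpDiv (hφ : ((-1 : ℤ) : WithTop ℤ) ≤ φ.orderTop) (i : ℕ) :
    (iteratedDerivExpDiv D φ i).coeff (-i) = D (φ.coeff (-1)) ^ i := by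
  induction i with
  | zero => simp [iteratedDerivExpDiv]
  | succ i ih =>
    have hvanish : (iteratedDerivExpDiv D φ i).coeff (-(i + 1 : ℕ)) = 0 :=
      HahnSeries.coeff_eq_zero_of_lt_orderTop
        ((WithTop.coe_lt_coe.mpr (by omega)).trans_le (neg_le_orderTop_iteratedDerivExpDiv hφ i))
    rw [iteratedDerivExpDiv, HahnSeries.coeff_add, coeffwise_coeff, hvanish, map_zero, zero_add,
      show (-(i + 1 : ℕ) : ℤ) = -1 + -i + (0 : ℕ) by push_cast; ring,
      HahnSeries.coeff_mul_add_add_natCast (hφ.trans (orderTop_le_orderTop_coeffwise D φ))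
        (neg_le_orderTop_iteratedDerivExpDiv hφ i)]
    simp [ih, pow_succ']

theorem coeff_neg_add_one_iteratedDerivExpDiv (hφ : ((-1 : ℤ) : WithTop ℤ) ≤ φ.orderTop)
    (i : ℕ) :
    (iteratedDerivExpDiv D φ i).coeff (-i + 1) =
      i • (D (φ.coeff (-1)) ^ (i - 1) * D (φ.coeff 0)) +
        i.choose 2 • (D (φ.coeff (-1)) ^ (i - 2) * D (D (φ.coeff (-1)))) := by
  induction i with
  | zero => simp [iteratedDerivExpDiv]
  | succ i ih =>
    rw [iteratedDerivExpDiv, HahnSeries.coeff_add, coeffwise_coeff,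
      show (-(i + 1 : ℕ) : ℤ) + 1 = -i by push_cast; ring, coeff_neg_iteratedDerivExpDiv hφ,
      show (-i : ℤ) = -1 + -i + (1 : ℕ) by push_cast; ring,
      HahnSeries.coeff_mul_add_add_natCast (hφ.trans (orderTop_le_orderTop_coeffwise D φ))
        (neg_le_orderTop_iteratedDerivExpDiv hφ i)]
    simpa [Finset.Nat.sum_antidiagonal_succ, ih, Derivation.leibniz_pow,
      coeff_neg_iteratedDerivExpDiv hφ] using
      choose_two_succ_identity (D (φ.coeff (-1))) (D (φ.coeff 0)) (D (D (φ.coeff (-1)))) i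

end iteratedDerivExpDiv

/-- Let `φ = Σ_{g ≥ 0} ε^{g−1} φ_g` be as above, and let
`Ψ i = ∂ₓ^i(e^φ)/e^φ`, characterized by `Ψ 0 = 1` and the recursion
`Ψ (i+1) = ∂ₓ(Ψ i) + (∂ₓ φ)·Ψ i` (which encodes `∂ₓ^{i+1} e^φ = ∂ₓ(Ψ_i e^φ)`).
Then for every `i ≥ 0`,
`∂ₓ^i(e^φ)/e^φ = ε^{−i}(∂ₓφ₀)^i
  + ε^{−i+1}( i(∂ₓφ₀)^{i−1}(∂ₓφ₁) + (i(i−1)/2)(∂ₓφ₀)^{i−2}(∂ₓ²φ₀) ) + O(ε^{−i+2})`,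
i.e. the coefficients of `ε^{−i}` and `ε^{−i+1}` of `Ψ i` are as displayed. -/
theorem eps_expansion_deriv_exp (D : Derivation ℚ R R) (φg : ℕ → R)
    (Ψ : ℕ → HahnSeries ℤ R) (hΨ0 : Ψ 0 = 1)
    (hΨ : ∀ n : ℕ, Ψ (n + 1) =
      coeffwise D (Ψ n) + coeffwise D (epsLaurent φg) * Ψ n) (i : ℕ) :
    (Ψ i).coeff (-(i : ℤ)) = (D (φg 0)) ^ i ∧
    (Ψ i).coeff (-(i : ℤ) + 1) =
      i • ((D (φg 0)) ^ (i - 1) * D (φg 1)) +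
      (i * (i - 1) / 2) • ((D (φg 0)) ^ (i - 2) * (⇑D)^[2] (φg 0)) := by
  have hΨ_eq : Ψ = iteratedDerivExpDiv D (epsLaurent φg) := by
    funext n
    induction n with
    | zero => exact hΨ0
    | succ n ih => rw [hΨ, ih, iteratedDerivExpDiv]
  have hφ0 : (epsLaurent φg).coeff (-1) = φg 0 := by
    simpa using epsLaurent_coeff_natCast_sub_one φg 0
  have hφ1 : (epsLaurent φg).coeff 0 = φg 1 := by
    simpa using epsLaurent_coeff_natCast_sub_one φg 1
  have hφ := neg_one_le_orderTop_epsLaurent φg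
  subst hΨ_eq
  rw [coeff_neg_iteratedDerivExpDiv hφ, coeff_neg_add_one_iteratedDerivExpDiv hφ, hφ0, hφ1,
    ← Nat.choose_two_right]
  exact ⟨rfl, rfl⟩
end

section
/- In the algebra of pseudo-differential operators A = Σ_{n ≤ m} a_n ∂_x^n with coefficients a_n in a differential ring (R, ∂), the composition defined by ∂_x^k ∘ f = Σ_{l ≥ 0} (k(k−1)⋯(k−l+1)/l!) · (∂^l f) · ∂_x^{k−l} for k ∈ ℤ, extended bilinearly and continuously, is associative. -/
open Finset

/-- The generalized binomial coefficient `k(k−1)⋯(k−l+1)/l!` for `k : ℤ`. -/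
def genBinom (k : ℤ) (l : ℕ) : ℚ :=
  (∏ i ∈ Finset.range l, ((k : ℚ) - (i : ℚ))) / (Nat.factorial l : ℚ)

/-- A pseudo-differential operator `Σ_{n ≤ bound} a_n ∂ₓ^n` with coefficients in `R`:
a family of coefficients `a_n` indexed by `n : ℤ`, vanishing above some bound. -/
structure PDO (R : Type*) [CommRing R] where
  coeff : ℤ → R
  bound : ℤ
  coeff_eq_zero : ∀ n : ℤ, bound < n → coeff n = 0

variable {R : Type*} [CommRing R] [Algebra ℚ R]

/-- The coefficient of `∂ₓ^n` in the composition `A ∘ B`, determined by the generalized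
Leibniz rule `∂ₓ^k ∘ f = Σ_{l ≥ 0} (k(k−1)⋯(k−l+1)/l!)(∂^l f) ∂ₓ^{k−l}` together with
bilinearity and continuity: the terms `a_k · (k…(k−l+1)/l!) ∂^l(b_j)` with
`k − l + j = n` are parametrized by `k = n − B.bound + p` and `l ≤ p`. -/
def pdoCompCoeff (D : Derivation ℚ R R) (A B : PDO R) (n : ℤ) : R :=
  ∑ p ∈ Finset.range (A.bound + B.bound + 1 - n).toNat,
    ∑ l ∈ Finset.range (p + 1),
      A.coeff (n - B.bound + p) *
        (genBinom (n - B.bound + p) l • (⇑D)^[l] (B.coeff (B.bound - p + l)))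

/-- Composition of pseudo-differential operators. -/
def pdoComp (D : Derivation ℚ R R) (A B : PDO R) : PDO R where
  coeff := pdoCompCoeff D A B
  bound := A.bound + B.bound
  coeff_eq_zero := by
    intro n hn
    have h : (A.bound + B.bound + 1 - n).toNat = 0 := by omega
    simp [pdoCompCoeff, h]

/-- The pseudo-differential operator `∂ₓ^k`. -/
def pdoDelta (k : ℤ) : PDO R where
  coeff := fun n => if n = k then 1 else 0
  bound := k
  coeff_eq_zero := by
    intro n hn
    try dsimp only
    rw [if_neg (by omega)]

/-- The identity pseudo-differential operator `1 = ∂ₓ^0`. -/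
def pdoOne : PDO R := pdoDelta 0

/-- Iterated composition power `A^n` of a pseudo-differential operator. -/
def pdoNpow (D : Derivation ℚ R R) (A : PDO R) : ℕ → PDO R
  | 0 => pdoOne
  | n + 1 => pdoComp D A (pdoNpow D A n)

/-- The differential-operator part `A₊ = Σ_{n ≥ 0} a_n ∂ₓ^n`. -/
def pdoPlus (A : PDO R) : PDO R where
  coeff := fun n => if 0 ≤ n then A.coeff n else 0
  bound := max A.bound 0
  coeff_eq_zero := by
    intro n hn
    try dsimp only
    by_cases h : 0 ≤ n
    · rw [if_pos h]; exact A.coeff_eq_zero n (by omega)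
    · rw [if_neg h]

/-- The purely negative part `A₋ = A − A₊ = Σ_{n ≤ −1} a_n ∂ₓ^n`. -/
def pdoMinus (A : PDO R) : PDO R where
  coeff := fun n => if n < 0 then A.coeff n else 0
  bound := -1
  coeff_eq_zero := by
    intro n hn
    try dsimp only
    rw [if_neg (by omega)]

/-!
Fix `n`. Expanding both triple compositions with the Leibniz rule writes their `∂ₓ^n`-coefficients
as finite sums, over the indices `k`, `j` of the coefficients of `A` and `B`, of terms
`a_k (∂^{l₁} b_j) (∂^{l₂} c_{n-k+l₁-j+l₂})`. For fixed `k`, `j` the scalar weights agree by two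
identities of generalized binomial coefficients: `C(k,l) C(l,s) = C(k,s) C(k-s,l-s)` on the side of
`A ∘ (B ∘ C)`, where `∂^l` hits a product, and Chu–Vandermonde for `C(k-l₁+j, l₂)` on the side of
`(A ∘ B) ∘ C`. Since coefficients vanish above the bound, every sum can be taken over a fixed box of
indices that is large enough, which lets the sums be interchanged and reindexed freely.
-/

open Polynomial in
theorem genBinom_eq_ringChoose (k : ℤ) (l : ℕ) : genBinom k l = Ring.choose (k : ℚ) l := by
  rw [Ring.choose_eq_smul, ← aeval_eq_smeval, aeval_def, eval₂_eq_eval_map, descPochhammer_map,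
    descPochhammer_eval_eq_prod_range, smul_eq_mul, genBinom, div_eq_inv_mul]

theorem genBinom_mul_choose (k : ℤ) {s l : ℕ} (h : s ≤ l) :
    genBinom k l * l.choose s = genBinom k s * genBinom (k - s) (l - s) := by
  rw [genBinom_eq_ringChoose, genBinom_eq_ringChoose, genBinom_eq_ringChoose, mul_comm,
    ← nsmul_eq_mul, Ring.choose_smul_choose _ h]
  push_cast
  rfl

theorem genBinom_add (a b : ℤ) (l : ℕ) :
    genBinom (a + b) l = ∑ u ∈ range (l + 1), genBinom a u * genBinom b (l - u) := by
  simp only [genBinom_eq_ringChoose, Int.cast_add]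
  rw [Ring.add_choose_eq l (Commute.all _ _), Nat.sum_antidiagonal_eq_sum_range_succ_mk]

theorem Derivation.iterate_leibniz {S A : Type*} [CommSemiring S] [CommSemiring A] [Algebra S A]
    (D : Derivation S A A) (n : ℕ) (a b : A) :
    (⇑D)^[n] (a * b) = ∑ i ∈ range (n + 1), n.choose i • ((⇑D)^[i] a * (⇑D)^[n - i] b) := by
  rw [← Nat.sum_antidiagonal_eq_sum_range_succ (fun i j ↦ n.choose i • ((⇑D)^[i] a * (⇑D)^[j] b))]
  induction n with
  | zero => simp
  | succ n ih =>
    rw [sum_antidiagonal_choose_succ_nsmul (fun i j => (⇑D)^[i] a * (⇑D)^[j] b) n]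
    simp only [Function.iterate_succ_apply', ih, map_sum, map_nsmul, Derivation.leibniz,
      smul_eq_mul, smul_add, sum_add_distrib]
    congr 1
    refine sum_congr rfl fun ⟨i, j⟩ hij => ?_
    rw [mul_comm, n.choose_symm_of_eq_add (mem_antidiagonal.1 hij).symm]

theorem Derivation.iterate_map_sum {S A : Type*} [CommSemiring S] [CommSemiring A] [Algebra S A]
    {ι : Type*} (D : Derivation S A A) (n : ℕ) (s : Finset ι) (f : ι → A) :
    (⇑D)^[n] (∑ i ∈ s, f i) = ∑ i ∈ s, (⇑D)^[n] (f i) := by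
  rw [← Derivation.coeFn_coe, ← Module.End.coe_pow, map_sum]

theorem Derivation.iterate_map_smul {S A : Type*} [CommSemiring S] [CommSemiring A] [Algebra S A]
    (D : Derivation S A A) (n : ℕ) (c : S) (a : A) :
    (⇑D)^[n] (c • a) = c • (⇑D)^[n] a := by
  rw [← Derivation.coeFn_coe, ← Module.End.coe_pow, _root_.map_smul]

theorem sum_range_diag_eq_sum_range_range {M : Type*} [AddCommMonoid M] (N : ℕ) (f : ℕ → ℕ → M)
    (hf : ∀ s t, N ≤ s + t → f s t = 0) :
    ∑ l ∈ range N, ∑ s ∈ range (l + 1), f s (l - s) = ∑ s ∈ range N, ∑ t ∈ range N, f s t := by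
  rw [sum_range_diag_flip]
  refine sum_congr rfl fun s hs => sum_subset (range_subset_range.2 (N.sub_le s)) fun t _ ht => ?_
  simp only [mem_range, not_lt] at hs ht
  exact hf s t (by omega)

theorem sum_genBinom_choose_smul_eq_sum_genBinom_smul {M : Type*} [AddCommMonoid M] [Module ℚ M]
    (k j : ℤ) (N : ℕ) (X : ℕ → ℕ → M) (hX : ∀ l₁ l₂, N ≤ l₁ + l₂ → X l₁ l₂ = 0) :
    ∑ l ∈ range N, ∑ l₃ ∈ range N, ∑ s ∈ range (l + 1),
        (genBinom k l * l.choose s * genBinom j l₃) • X s (l - s + l₃) =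
      ∑ l₁ ∈ range N, ∑ l₂ ∈ range N, (genBinom k l₁ * genBinom (k - l₁ + j) l₂) • X l₁ l₂ := by
  calc _ = ∑ l ∈ range N, ∑ s ∈ range (l + 1), ∑ l₃ ∈ range N,
          (genBinom k s * genBinom (k - s) (l - s) * genBinom j l₃) • X s (l - s + l₃) := by
        refine sum_congr rfl fun l _ => ?_
        rw [sum_comm]
        refine sum_congr rfl fun s hs => sum_congr rfl fun l₃ _ => ?_
        rw [genBinom_mul_choose k (mem_range_succ_iff.1 hs)]
    _ = ∑ s ∈ range N, ∑ t ∈ range N, ∑ l₃ ∈ range N,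
          (genBinom k s * genBinom (k - s) t * genBinom j l₃) • X s (t + l₃) :=
        sum_range_diag_eq_sum_range_range N (fun s t => ∑ l₃ ∈ range N,
            (genBinom k s * genBinom (k - s) t * genBinom j l₃) • X s (t + l₃)) fun s t h =>
          sum_eq_zero fun l₃ _ => by rw [hX _ _ (by omega), smul_zero]
    _ = _ := by
      refine sum_congr rfl fun l₁ _ => ?_
      calc _ = ∑ l₂ ∈ range N, ∑ t ∈ range (l₂ + 1),
              (genBinom k l₁ * genBinom (k - l₁) t * genBinom j (l₂ - t)) • X l₁ (t + (l₂ - t)) :=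
            (sum_range_diag_eq_sum_range_range N (fun t l₃ =>
              (genBinom k l₁ * genBinom (k - l₁) t * genBinom j l₃) • X l₁ (t + l₃))
              fun t l₃ h => by rw [hX _ _ (by omega), smul_zero]).symm
        _ = _ := by
          refine sum_congr rfl fun l₂ _ => ?_
          rw [genBinom_add, mul_sum, sum_smul]
          refine sum_congr rfl fun t ht => ?_
          rw [mul_assoc, Nat.add_sub_cancel' (mem_range_succ_iff.1 ht)]

theorem sum_Icc_eq_sum_Icc_add {M : Type*} [AddCommMonoid M] {f : ℤ → M} {lo hi : ℤ}
    (hf : ∀ m, m < lo ∨ hi < m → f m = 0) {a b a' b' c : ℤ} (ha : a ≤ lo) (hb : hi ≤ b)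
    (ha' : c + a' ≤ lo) (hb' : hi ≤ c + b') :
    ∑ m ∈ Icc a b, f m = ∑ j ∈ Icc a' b', f (c + j) := by
  rw [show ∑ j ∈ Icc a' b', f (c + j) = ∑ m ∈ Icc (c + a') (c + b'), f m by
    rw [← map_add_left_Icc, sum_map]; rfl]
  exact sum_congr_of_eq_on_inter
    (fun m hm hm' => hf m (by simp only [mem_Icc] at hm hm'; omega))
    (fun m hm hm' => hf m (by simp only [mem_Icc] at hm hm'; omega)) fun _ _ _ => rfl

section Composition

variable (D : Derivation ℚ R R)

theorem coeff_mul_smul_iterate_eq_zero (A B : PDO R) {k j : ℤ} (h : A.bound < k ∨ B.bound < j)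
    (c : ℚ) (l : ℕ) : A.coeff k * (c • (⇑D)^[l] (B.coeff j)) = 0 := by
  rcases h with h | h
  · rw [A.coeff_eq_zero k h, zero_mul]
  · rw [B.coeff_eq_zero j h, iterate_map_zero, smul_zero, mul_zero]

theorem coeff_mul_iterate_mul_iterate_eq_zero (A B C : PDO R) {k j p : ℤ}
    (h : B.bound < j ∨ C.bound < p) (l₁ l₂ : ℕ) :
    A.coeff k * ((⇑D)^[l₁] (B.coeff j) * (⇑D)^[l₂] (C.coeff p)) = 0 := by
  rcases h with h | h
  · rw [B.coeff_eq_zero j h, iterate_map_zero, zero_mul, mul_zero]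
  · rw [C.coeff_eq_zero p h, iterate_map_zero, mul_zero, mul_zero]

theorem pdoComp_coeff_eq_sum_Icc_range (A B : PDO R) {n a b : ℤ} {N : ℕ} (ha : a ≤ n - B.bound)
    (hb : A.bound ≤ b) (hN : A.bound + B.bound - n < N) :
    (pdoComp D A B).coeff n =
      ∑ k ∈ Icc a b, ∑ l ∈ range N,
        A.coeff k * (genBinom k l • (⇑D)^[l] (B.coeff (n - k + l))) := by
  calc (pdoComp D A B).coeff n
      = ∑ p ∈ range (A.bound + B.bound + 1 - n).toNat, ∑ l ∈ range N,
          A.coeff (n - B.bound + p) *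
            (genBinom (n - B.bound + p) l • (⇑D)^[l] (B.coeff (n - (n - B.bound + p) + l))) := by
        dsimp only [pdoComp, pdoCompCoeff]
        refine sum_congr rfl fun p hp => ?_
        rw [mem_range] at hp
        simp only [show ∀ l : ℕ, B.bound - p + l = n - (n - B.bound + p) + l from fun l => by ring]
        refine sum_subset (range_subset_range.2 (by omega)) fun l _ hl => ?_
        rw [mem_range] at hl
        exact coeff_mul_smul_iterate_eq_zero D A B (Or.inr (by omega)) _ _
    _ = ∑ k ∈ Icc (n - B.bound) A.bound, ∑ l ∈ range N,
          A.coeff k * (genBinom k l • (⇑D)^[l] (B.coeff (n - k + l))) := by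
        refine sum_nbij' (fun p : ℕ => n - B.bound + p) (fun k : ℤ => (k - (n - B.bound)).toNat)
          ?_ ?_ ?_ ?_ fun _ _ => rfl <;>
          intro x hx <;> simp only [mem_range, mem_Icc] at hx ⊢ <;> omega
    _ = _ := by
        refine sum_subset (Icc_subset_Icc (by omega) hb) fun k _ hk => sum_eq_zero fun l _ => ?_
        rw [mem_Icc] at hk
        exact coeff_mul_smul_iterate_eq_zero D A B (by omega) _ _

theorem pdoComp_pdoComp_left_coeff_eq_sum (A B C : PDO R) {n : ℤ} {N : ℕ}
    (hN : A.bound + B.bound + C.bound - n < N) :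
    (pdoComp D (pdoComp D A B) C).coeff n =
      ∑ k ∈ Icc (n - B.bound - C.bound) A.bound, ∑ j ∈ Icc (n - A.bound - C.bound) B.bound,
        ∑ l₁ ∈ range N, ∑ l₂ ∈ range N, (genBinom k l₁ * genBinom (k - l₁ + j) l₂) •
          (A.coeff k * ((⇑D)^[l₁] (B.coeff j) * (⇑D)^[l₂] (C.coeff (n - k + l₁ - j + l₂)))) := by
  rw [pdoComp_coeff_eq_sum_Icc_range D _ C (a := n - C.bound) (b := A.bound + B.bound) le_rfl
    le_rfl hN]
  calc _ = ∑ m ∈ Icc (n - C.bound) (A.bound + B.bound), ∑ l₂ ∈ range N,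
          ∑ k ∈ Icc (n - B.bound - C.bound) A.bound, ∑ l₁ ∈ range N,
            (genBinom k l₁ * genBinom m l₂) • (A.coeff k *
              ((⇑D)^[l₁] (B.coeff (m - k + l₁)) * (⇑D)^[l₂] (C.coeff (n - m + l₂)))) := by
        refine sum_congr rfl fun m hm => sum_congr rfl fun l₂ _ => ?_
        rw [mem_Icc] at hm
        rw [pdoComp_coeff_eq_sum_Icc_range D A B (a := n - B.bound - C.bound) (b := A.bound)
          (N := N) (by omega) le_rfl (by omega)]
        simp only [sum_mul, Algebra.smul_def, map_mul]
        exact sum_congr rfl fun k _ => sum_congr rfl fun l₁ _ => by ring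
    _ = ∑ k ∈ Icc (n - B.bound - C.bound) A.bound, ∑ l₁ ∈ range N,
          ∑ m ∈ Icc (n - C.bound) (A.bound + B.bound), ∑ l₂ ∈ range N,
            (genBinom k l₁ * genBinom m l₂) • (A.coeff k *
              ((⇑D)^[l₁] (B.coeff (m - k + l₁)) * (⇑D)^[l₂] (C.coeff (n - m + l₂)))) := by
        refine (sum_congr rfl fun m _ =>
          sum_comm.trans (sum_congr rfl fun k _ => sum_comm)).trans ?_
        rw [sum_comm]
        exact sum_congr rfl fun k _ => sum_comm
    _ = ∑ k ∈ Icc (n - B.bound - C.bound) A.bound, ∑ l₁ ∈ range N,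
          ∑ j ∈ Icc (n - A.bound - C.bound) B.bound, ∑ l₂ ∈ range N,
            (genBinom k l₁ * genBinom (k - l₁ + j) l₂) • (A.coeff k *
              ((⇑D)^[l₁] (B.coeff j) * (⇑D)^[l₂] (C.coeff (n - k + l₁ - j + l₂)))) := by
        refine sum_congr rfl fun k hk => sum_congr rfl fun l₁ _ => ?_
        rw [mem_Icc] at hk
        -- substitute `m = (k - l₁) + j`
        refine (sum_Icc_eq_sum_Icc_add (lo := n - C.bound) (hi := k - l₁ + B.bound) (c := k - l₁)
          (fun m hm => sum_eq_zero fun l₂ _ => ?_) le_rfl (by omega) (by omega) le_rfl).trans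
          (sum_congr rfl fun j _ => sum_congr rfl fun l₂ _ => ?_)
        · rw [coeff_mul_iterate_mul_iterate_eq_zero D A B C (by omega), smul_zero]
        · rw [show k - l₁ + j - k + l₁ = j by ring,
            show n - (k - l₁ + j) + l₂ = n - k + l₁ - j + l₂ by ring]
    _ = _ := sum_congr rfl fun k _ => sum_comm

theorem pdoComp_pdoComp_right_coeff_eq_sum (A B C : PDO R) {n : ℤ} {N : ℕ}
    (hN : A.bound + B.bound + C.bound - n < N) :
    (pdoComp D A (pdoComp D B C)).coeff n =
      ∑ k ∈ Icc (n - B.bound - C.bound) A.bound, ∑ j ∈ Icc (n - A.bound - C.bound) B.bound,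
        ∑ l ∈ range N, ∑ l₃ ∈ range N, ∑ s ∈ range (l + 1),
          (genBinom k l * l.choose s * genBinom j l₃) • (A.coeff k * ((⇑D)^[s] (B.coeff j) *
            (⇑D)^[l - s + l₃] (C.coeff (n - k + s - j + ((l - s + l₃ : ℕ) : ℤ))))) := by
  rw [pdoComp_coeff_eq_sum_Icc_range D A _ (a := n - B.bound - C.bound) (b := A.bound)
    (N := N) (by dsimp only [pdoComp]; omega) le_rfl (by dsimp only [pdoComp]; omega)]
  refine sum_congr rfl fun k hk => ?_
  rw [mem_Icc] at hk
  rw [← sum_comm]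
  refine sum_congr rfl fun l _ => ?_
  rw [pdoComp_coeff_eq_sum_Icc_range D B C (a := n - A.bound - C.bound) (b := B.bound) (N := N)
    (by omega) le_rfl (by omega)]
  simp only [Derivation.iterate_map_sum, smul_sum, mul_sum]
  refine sum_congr rfl fun j _ => sum_congr rfl fun l₃ _ => ?_
  rw [mul_smul_comm (genBinom j l₃) (B.coeff j), Derivation.iterate_map_smul,
    Derivation.iterate_leibniz, smul_sum, smul_sum, mul_sum]
  refine sum_congr rfl fun s hs => ?_
  have hsl : s ≤ l := mem_range_succ_iff.1 hs
  rw [← Function.iterate_add_apply, show n - k + l - j + l₃ = n - k + s - j + ((l - s + l₃ : ℕ) : ℤ)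
    by push_cast [hsl]; ring]
  rw [nsmul_eq_mul]
  simp only [Algebra.smul_def, map_mul, map_natCast]
  ring

end Composition

/-- The composition of pseudo-differential operators defined by the
generalized Leibniz rule `∂ₓ^k ∘ f = Σ_{l ≥ 0} (k(k−1)⋯(k−l+1)/l!)(∂^l f) ∂ₓ^{k−l}`,
extended bilinearly and continuously, is associative (as an operation on the
coefficient families). -/
theorem pdoComp_assoc (D : Derivation ℚ R R) (A B C : PDO R) :
    (pdoComp D (pdoComp D A B) C).coeff = (pdoComp D A (pdoComp D B C)).coeff := by
  funext n
  obtain ⟨N, hN⟩ : ∃ N : ℕ, A.bound + B.bound + C.bound - n < N :=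
    ⟨(A.bound + B.bound + C.bound + 1 - n).toNat, by omega⟩
  rw [pdoComp_pdoComp_left_coeff_eq_sum D A B C hN, pdoComp_pdoComp_right_coeff_eq_sum D A B C hN]
  refine sum_congr rfl fun k hk => sum_congr rfl fun j hj => ?_
  rw [mem_Icc] at hk hj
  refine (sum_genBinom_choose_smul_eq_sum_genBinom_smul k j N
    (fun l₁ l₂ => A.coeff k * ((⇑D)^[l₁] (B.coeff j) * (⇑D)^[l₂] (C.coeff (n - k + l₁ - j + l₂))))
    fun l₁ l₂ h => ?_).symm
  exact coeff_mul_iterate_mul_iterate_eq_zero D A B C (Or.inr (by omega)) l₁ l₂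
end
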